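/- arXiv:2302.11175 — 2 statements merged into one kernel-verified Lean document; each statement's English description precedes it below -/
import Mathlib

section
/- Let X be a quandle, A an abelian group and θ : X × X → A a quandle 2-cocycle. Define f_θ : X × X → ℤ[A] by f_θ(x,y) = 1·θ(x,y), and let 0 denote the constant-zero map X × X → ℤ[A]. Then (f_θ, 0) is an Alexander pair on X with values in ℤ[A]; explicitly, for all x, y, z ∈ X: (i) f_θ(x,x) + 0 = 1; (ii) f_θ(x,y)·(1·(−θ(x,y))) = 1 = (1·(−θ(x,y)))·f_θ(x,y), so f_θ(x,y) is a unit of ℤ[A]; (iii) f_θ(x◁y, z)·f_θ(x,y) = f_θ(x◁z, y◁z)·f_θ(x,z); (iv) f_θ(x◁y, z)·0 = 0·f_θ(y,z); and (v) 0 = f_θ(x◁z, y◁z)·0 + 0·0. -/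
open Quandles

/-- `e a` is the basis element `1·a` of the group ring `ℤ[A]`. -/
noncomputable def grpRingOf {A : Type*} [AddCommGroup A] (a : A) : AddMonoidAlgebra ℤ A :=
  AddMonoidAlgebra.single a 1

/-- The map `f_θ : X × X → ℤ[A]`, `f_θ(x,y) = 1·θ(x,y)`.  Here the quandle
operation `x◁y` is written `y ◃ x`. -/
noncomputable def fTheta {X : Type*} [Quandle X] {A : Type*} [AddCommGroup A]
    (θ : X → X → A) (x y : X) : AddMonoidAlgebra ℤ A :=
  grpRingOf (θ x y)

/-- The pair `(f_θ, 0)` obtained from a quandle 2-cocycle `θ` is an Alexander pair. -/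
theorem alexander_pair_of_two_cocycle {X : Type*} [Quandle X] {A : Type*} [AddCommGroup A]
    (θ : X → X → A)
    (hθ1 : ∀ x : X, θ x x = 0)
    (hθ2 : ∀ x y z : X, θ x y + θ (y ◃ x) z = θ x z + θ (z ◃ x) (z ◃ y)) :
    (∀ x : X, fTheta θ x x + (0 : AddMonoidAlgebra ℤ A) = 1) ∧
    (∀ x y : X, fTheta θ x y * grpRingOf (-(θ x y)) = 1 ∧
      grpRingOf (-(θ x y)) * fTheta θ x y = 1) ∧
    (∀ x y : X, IsUnit (fTheta θ x y)) ∧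
    (∀ x y z : X, fTheta θ (y ◃ x) z * fTheta θ x y
      = fTheta θ (z ◃ x) (z ◃ y) * fTheta θ x z) ∧
    (∀ x y z : X, fTheta θ (y ◃ x) z * (0 : AddMonoidAlgebra ℤ A)
      = (0 : AddMonoidAlgebra ℤ A) * fTheta θ y z) ∧
    (∀ x y z : X, (0 : AddMonoidAlgebra ℤ A)
      = fTheta θ (z ◃ x) (z ◃ y) * 0 + (0 : AddMonoidAlgebra ℤ A) * 0) := by

  have hmul : ∀ a b : A, (AddMonoidAlgebra.single a 1 : AddMonoidAlgebra ℤ A) *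
      AddMonoidAlgebra.single b 1 = AddMonoidAlgebra.single (a + b) 1 := by
    intro a b
    rw [AddMonoidAlgebra.single_mul_single, one_mul]
  have hone : (1 : AddMonoidAlgebra ℤ A) = AddMonoidAlgebra.single (0 : A) 1 := rfl
  refine ⟨?_, ?_, ?_, ?_, ?_, ?_⟩
  · intro x
    simp [fTheta, grpRingOf, hθ1 x, hone]
  · intro x y
    constructor
    · simp only [fTheta, grpRingOf]; rw [hmul, add_neg_cancel, hone]
    · simp only [fTheta, grpRingOf]; rw [hmul, neg_add_cancel, hone]
  · intro x y
    exact IsUnit.of_mul_eq_one _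
      (by simp only [fTheta, grpRingOf]; rw [hmul, add_neg_cancel, hone])
  · intro x y z
    simp only [fTheta, grpRingOf]; rw [hmul, hmul, add_comm (θ (y ◃ x) z), add_comm (θ (z ◃ x) (z ◃ y)), hθ2 x y z]
  · intro x y z; simp
  · intro x y z; simp
end

section
/- Let X be a quandle, A an abelian group, θ : X × X → A a quandle 2-cocycle, and let d : X → ℤ[A] be any map satisfying the f_θ-derivative rule d(x◁y) = (1·θ(x,y))·d(x) for all x, y ∈ X. Then for every x ∈ X, every n ≥ 0, all y₁, …, y_n ∈ X and all signs ε₁, …, ε_n ∈ {1, −1}, the following holds: defining x₀ = x and, for 1 ≤ i ≤ n, xᵢ = xᵢ₋₁◁yᵢ if εᵢ = 1 and xᵢ = xᵢ₋₁◁⁻¹yᵢ if εᵢ = −1, and setting wᵢ = xᵢ₋₁ if εᵢ = 1 and wᵢ = xᵢ if εᵢ = −1, one has d(x_n) = (1·(Σ_{i=1}^{n} εᵢ·θ(wᵢ, yᵢ)))·d(x₀). (This is Proposition 3.2 of the paper, computing the f_θ-derivative of an iterated quandle operation x^{y₁^{ε₁}⋯y_n^{ε_n}}.) -/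
open Quandles

lemma grpRingOf_add {A : Type*} [AddCommGroup A] (a b : A) :
    grpRingOf (a + b) = grpRingOf a * grpRingOf b := by
  simp [grpRingOf, AddMonoidAlgebra.single_mul_single]

lemma grpRingOf_zero {A : Type*} [AddCommGroup A] : grpRingOf (0 : A) = 1 := by
  simp [grpRingOf, AddMonoidAlgebra.one_def]

/-- Proposition 3.2: if `d` satisfies the `f_θ`-derivative rule
`d(x◁y) = (1·θ(x,y))·d(x)` (here `x◁y` is `y ◃ x` and `x◁⁻¹y` is `y ◃⁻¹ x`),
then the derivative of an iterated operation `x^{y₁^{ε₁}⋯y_n^{ε_n}}` is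
`1·(Σᵢ εᵢ θ(wᵢ, yᵢ))` times `d(x)`. -/
theorem fTheta_derivative_iterate {X : Type*} [Quandle X] {A : Type*} [AddCommGroup A]
    (θ : X → X → A)
    (hθ1 : ∀ x : X, θ x x = 0)
    (hθ2 : ∀ x y z : X, θ x y + θ (y ◃ x) z = θ x z + θ (z ◃ x) (z ◃ y))
    (d : X → AddMonoidAlgebra ℤ A)
    (hd : ∀ x y : X, d (y ◃ x) = grpRingOf (θ x y) * d x)
    (n : ℕ) (x : X) (y : Fin n → X) (ε : Fin n → ℤ)
    (hε : ∀ i, ε i = 1 ∨ ε i = -1)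
    (p : Fin (n + 1) → X)
    (hp0 : p 0 = x)
    (hp : ∀ i : Fin n,
      p i.succ = if ε i = 1 then y i ◃ p i.castSucc else y i ◃⁻¹ p i.castSucc)
    (w : Fin n → X)
    (hw : ∀ i : Fin n, w i = if ε i = 1 then p i.castSucc else p i.succ) :
    d (p (Fin.last n)) = grpRingOf (∑ i, ε i • θ (w i) (y i)) * d x := by
  induction n with
  | zero =>
      have h0 : (Fin.last 0) = (0 : Fin 1) := rfl
      rw [h0, hp0]
      simp [grpRingOf_zero]
  | succ n ih =>
      set i0 : Fin (n + 1) := Fin.last n with hi0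
      have key := ih (fun i => y i.castSucc) (fun i => ε i.castSucc)
        (fun i => hε i.castSucc) (fun i => p i.castSucc) hp0
        (fun i => by
          have := hp i.castSucc
          rw [Fin.succ_castSucc] at this
          exact this)
        (fun i => w i.castSucc)
        (fun i => by
          have := hw i.castSucc
          rw [Fin.succ_castSucc] at this
          exact this)
      have hlast : p (Fin.last (n + 1)) = p i0.succ := by
        rw [hi0, Fin.succ_last]
      have hsum : (∑ i, ε i • θ (w i) (y i)) =
          (∑ i : Fin n, ε i.castSucc • θ (w i.castSucc) (y i.castSucc))
            + ε i0 • θ (w i0) (y i0) := by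
        rw [Fin.sum_univ_castSucc]
      set S := ∑ i : Fin n, ε i.castSucc • θ (w i.castSucc) (y i.castSucc) with hS
      rcases hε i0 with h1 | h1
      · have hwi : w i0 = p i0.castSucc := by rw [hw i0, if_pos h1]
        have hpi : p i0.succ = y i0 ◃ p i0.castSucc := by rw [hp i0, if_pos h1]
        rw [hlast, hpi, hd, key, hsum, grpRingOf_add, h1, one_smul, hwi]
        ring
      · have hwi : w i0 = p i0.succ := by rw [hw i0, if_neg (by omega)]
        have hpi : p i0.succ = y i0 ◃⁻¹ p i0.castSucc := by rw [hp i0, if_neg (by omega)]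
        have hback : p i0.castSucc = y i0 ◃ p i0.succ := by
          rw [hpi, Rack.right_inv]
        have hdinv : d (p i0.succ) = grpRingOf (-θ (p i0.succ) (y i0)) * d (p i0.castSucc) := by
          rw [hback, hd, ← mul_assoc, ← grpRingOf_add, neg_add_cancel, grpRingOf_zero, one_mul]
        rw [hlast, hdinv, key, hsum, grpRingOf_add, h1, neg_one_zsmul, hwi]
        ring
end
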